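/- arXiv:2410.20646 — 9 statements merged into one kernel-verified Lean document; each statement's English description precedes it below -/
import Mathlib

section
/- Let m ≥ n ≥ 1 and A ∈ ℝ^{m×n}. Assume (i) for every subset S of row indices with |S| = n, the rows of A indexed by S are linearly independent, and (ii) for every x ∈ ℝ^n with ‖x‖₂ = 1 the vector Ax has at least n strictly positive entries. Then the ReLU layer map f_A : ℝ^n → ℝ^m defined componentwise by f_A(x)_i = max((Ax)_i, 0) is injective. -/
/-- The ReLU layer map `x ↦ max (A x) 0` (componentwise). -/
noncomputable def reluLayer {m n : ℕ} (A : Matrix (Fin m) (Fin n) ℝ)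
    (x : EuclideanSpace ℝ (Fin n)) : Fin m → ℝ :=
  fun i => max (A.mulVec x i) 0

/-!
If `f_A x = f_A y` with `x ≠ 0`, then `A x` has at least `n` positive entries (the hypothesis on
unit vectors, rescaled), and on each of them `(A x)_i = (A y)_i`. Any `n` of these rows form an
invertible `n × n` matrix, which forces `x = y`; the case `x = y = 0` is trivial.
-/

namespace Matrix

variable {K : Type*} [Field K] {m n : Type*} [Fintype n] [DecidableEq n]

theorem eq_of_mulVec_eq_on_of_linearIndependent (A : Matrix m n K) {S : Finset m}
    (hS : S.card = Fintype.card n) (hrows : LinearIndependent K (fun i : S => A i))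
    {x y : n → K} (h : ∀ i ∈ S, (A *ᵥ x) i = (A *ᵥ y) i) : x = y := by
  let e : n ≃ S := Fintype.equivOfCardEq (by simp [hS])
  let B : Matrix n n K := A.submatrix (fun j => (e j : m)) id
  have hB : IsUnit B := linearIndependent_rows_iff_isUnit.mp (hrows.comp e e.injective)
  exact mulVec_injective_of_isUnit hB (funext fun j => h (e j) (e j).2)

end Matrix

section

variable {m n : ℕ} (A : Matrix (Fin m) (Fin n) ℝ)

lemma setOf_pos_mulVec_smul {c : ℝ} (hc : 0 < c) (x : EuclideanSpace ℝ (Fin n)) :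
    {i | 0 < A.mulVec (c • x) i} = {i | 0 < A.mulVec x i} := by
  ext i
  simp [Matrix.mulVec_smul, mul_pos_iff_of_pos_left hc]

lemma le_ncard_setOf_pos_mulVec_of_ne_zero
    (hpos : ∀ x : EuclideanSpace ℝ (Fin n), ‖x‖ = 1 → n ≤ {i | 0 < A.mulVec x i}.ncard)
    {x : EuclideanSpace ℝ (Fin n)} (hx : x ≠ 0) : n ≤ {i | 0 < A.mulVec x i}.ncard := by
  rw [← setOf_pos_mulVec_smul A (inv_pos.2 (norm_pos_iff.2 hx))]
  exact hpos (‖x‖⁻¹ • x) (norm_smul_inv_norm hx)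

lemma mulVec_eq_of_reluLayer_eq {x y : EuclideanSpace ℝ (Fin n)}
    (h : reluLayer A x = reluLayer A y) {i : Fin m} (hi : 0 < A.mulVec x i) :
    A.mulVec x i = A.mulVec y i := by
  have hxy : max (A.mulVec x i) 0 = max (A.mulVec y i) 0 := congrFun h i
  rw [max_eq_left hi.le] at hxy
  grind

end

theorem relu_layer_injective_general (m n : ℕ)
    (A : Matrix (Fin m) (Fin n) ℝ)
    (hrows : ∀ S : Finset (Fin m), S.card = n →
      LinearIndependent ℝ (fun i : S => A i))
    (hpos : ∀ x : EuclideanSpace ℝ (Fin n), ‖x‖ = 1 →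
      n ≤ {i | 0 < A.mulVec x i}.ncard) :
    Function.Injective (reluLayer A) := by
  intro x y hxy
  wlog hx : x ≠ 0 generalizing x y
  · by_cases hy : y = 0
    · rw [not_not.mp hx, hy]
    · exact (this hxy.symm hy).symm
  have hcard := le_ncard_setOf_pos_mulVec_of_ne_zero A hpos hx
  rw [Set.ncard_eq_toFinset_card'] at hcard
  obtain ⟨S, hSpos, hS⟩ := Finset.exists_subset_card_eq hcard
  exact WithLp.ofLp_injective 2 <| A.eq_of_mulVec_eq_on_of_linearIndependent
    (by simpa using hS) (hrows S hS)
    fun i hi => mulVec_eq_of_reluLayer_eq A hxy (by simpa using hSpos hi)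

/-- If every `n` rows of `A` are linearly independent, and for every unit vector `x`
the vector `A x` has at least `n` strictly positive entries, then the ReLU layer map
is injective. -/
theorem relu_layer_injective (m n : ℕ) (hn : 1 ≤ n) (hmn : n ≤ m)
    (A : Matrix (Fin m) (Fin n) ℝ)
    (hrows : ∀ S : Finset (Fin m), S.card = n →
      LinearIndependent ℝ (fun i : S => A i))
    (hpos : ∀ x : EuclideanSpace ℝ (Fin n), ‖x‖ = 1 →
      n ≤ {i | 0 < A.mulVec x i}.ncard) :
    Function.Injective (reluLayer A) :=
  relu_layer_injective_general m n A hrows hpos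
end

section
/- Let A ∈ ℝ^{m×n} and x̄ ∈ ℝ^n, and set S = {i : (Ax̄)_i > 0}. If the rows of A indexed by S span ℝ^n (i.e., have rank n), then every x ∈ ℝ^n satisfying max((Ax)_i, 0) = max((Ax̄)_i, 0) for all i ∈ {1,…,m} must equal x̄; that is, x̄ is exactly recoverable from its ReLU output y = max(Ax̄, 0). -/
/-- If the rows of `A` indexed by the support `S = {i : (A x̄)_i > 0}` span `ℝ^n`,
then `x̄` is the unique vector whose ReLU output `max (A x, 0)` agrees with that
of `x̄`; i.e. `x̄` is exactly recoverable from `y = max (A x̄, 0)`. -/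
theorem relu_exact_recovery (m n : ℕ) (A : Matrix (Fin m) (Fin n) ℝ) (xbar : Fin n → ℝ)
    (hspan : Submodule.span ℝ
      (Set.range fun i : {i : Fin m // 0 < A.mulVec xbar i} => A i.1) = ⊤) :
    ∀ x : Fin n → ℝ,
      (∀ i : Fin m, max (A.mulVec x i) 0 = max (A.mulVec xbar i) 0) → x = xbar := by
  intro x hx
  set v : Fin n → ℝ := x - xbar with hv
  -- each supported row is orthogonal to v
  have hrow : ∀ i : Fin m, 0 < A.mulVec xbar i → dotProduct (A i) v = 0 := by
    intro i hi
    have h1 : A.mulVec x i = A.mulVec xbar i := by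
      have := hx i
      rw [max_eq_left hi.le] at this
      rcases le_or_gt (A.mulVec x i) 0 with h | h
      · rw [max_eq_right h] at this; linarith
      · rwa [max_eq_left h.le] at this
    have : dotProduct (A i) x = dotProduct (A i) xbar := h1
    simp [hv, dotProduct_sub, this]
  -- linear functional w ↦ ⟪w, v⟫ vanishes on the span = ⊤
  let f : (Fin n → ℝ) →ₗ[ℝ] ℝ :=
    { toFun := fun w => dotProduct w v
      map_add' := fun a b => add_dotProduct a b v
      map_smul' := fun c a => by simp [smul_dotProduct] }
  have hf : ∀ w ∈ Submodule.span ℝ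
      (Set.range fun i : {i : Fin m // 0 < A.mulVec xbar i} => A i.1), f w = 0 := by
    intro w hw
    induction hw using Submodule.span_induction with
    | mem w hw => obtain ⟨⟨i, hi⟩, rfl⟩ := hw; exact hrow i hi
    | zero => simp
    | add a b _ _ ha hb => simp [map_add, ha, hb]
    | smul c a _ ha => simp [map_smul, ha]
  have hvv : dotProduct v v = 0 := hf v (hspan ▸ Submodule.mem_top)
  have hv0 : v = 0 := dotProduct_self_eq_zero.mp hvv
  exact sub_eq_zero.mp (hv ▸ hv0)
end

section
/- Let m ≥ n ≥ 1 be integers, u ∈ ℝ^m and ν ≥ 0. Then for every z ∈ ℝ^m with N₊(z) < n one has ‖u − z‖₂² ≥ Σ_{i=1}^m ( u_i² + φ̄_ν(u_i) ) − ν(2n − m); in particular the Lagrangian lower bound inf{ ‖u − z‖₂² : z ∈ ℝ^m, N₊(z) < n } ≥ Σ_{i=1}^m ( u_i² + φ̄_ν(u_i) ) − ν(2n − m) holds for every ν ≥ 0. -/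
/-- `N₊ z` : number of strictly positive entries of `z` (the paper's ℓ0 count). -/
noncomputable def Nplus {m : ℕ} (z : Fin m → ℝ) : ℕ := {i | 0 < z i}.ncard

/-- `sgn t = 1` if `t > 0` and `sgn t = −1` if `t ≤ 0`. -/
noncomputable def sgn (t : ℝ) : ℝ := if 0 < t then 1 else -1

/-- `φ̄_ν(u)`: the per-coordinate minimum of `z² − 2uz + ν·sgn(z)`. -/
noncomputable def phibar (ν u : ℝ) : ℝ :=
  if u ≤ 0 then -u ^ 2 - ν else if u ≤ Real.sqrt (2 * ν) then -ν else -u ^ 2 + ν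

lemma key (ν : ℝ) (hν : 0 ≤ ν) (u z : ℝ) :
    u ^ 2 + phibar ν u - ν * sgn z ≤ (u - z) ^ 2 := by
  unfold phibar sgn
  rcases le_or_gt u 0 with hu | hu
  · rw [if_pos hu]
    split_ifs with hz <;> nlinarith
  · rw [if_neg (not_le.mpr hu)]
    rcases le_or_gt u (Real.sqrt (2*ν)) with h2 | h2
    · rw [if_pos h2]
      have hu2 : u ^ 2 ≤ 2 * ν := by
        nlinarith [Real.sq_sqrt (by linarith : (0:ℝ) ≤ 2*ν), Real.sqrt_nonneg (2*ν)]
      split_ifs with hz <;> nlinarith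
    · rw [if_neg (not_le.mpr h2)]
      have hu2 : 2 * ν < u ^ 2 := by
        nlinarith [Real.sq_sqrt (by linarith : (0:ℝ) ≤ 2*ν), Real.sqrt_nonneg (2*ν)]
      split_ifs with hz <;> nlinarith

lemma sum_sgn {m : ℕ} (z : Fin m → ℝ) :
    ∑ i, sgn (z i) = 2 * (Nplus z : ℝ) - m := by
  classical
  have hN : (Nplus z : ℝ) = ((Finset.univ.filter (fun i => 0 < z i)).card : ℝ) := by
    unfold Nplus
    rw [Set.ncard_eq_toFinset_card']
    congr 2
    ext i; simp
  rw [hN]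
  rw [← Finset.sum_filter_add_sum_filter_not Finset.univ (fun i => 0 < z i) (fun i => sgn (z i))]
  have e1 : ∀ i ∈ Finset.univ.filter (fun i => 0 < z i), sgn (z i) = 1 := by
    intro i hi; simp only [Finset.mem_filter] at hi; simp [sgn, hi.2]
  have e2 : ∀ i ∈ Finset.univ.filter (fun i => ¬ 0 < z i), sgn (z i) = -1 := by
    intro i hi; simp only [Finset.mem_filter] at hi; simp [sgn, hi.2]
  have h1 : ∑ i ∈ Finset.univ.filter (fun i => 0 < z i), sgn (z i)
      = ((Finset.univ.filter (fun i => 0 < z i)).card : ℝ) := by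
    rw [Finset.sum_congr rfl e1, Finset.sum_const, nsmul_eq_mul, mul_one]
  have h2 : ∑ i ∈ Finset.univ.filter (fun i => ¬ 0 < z i), sgn (z i)
      = -((Finset.univ.filter (fun i => ¬ 0 < z i)).card : ℝ) := by
    rw [Finset.sum_congr rfl e2, Finset.sum_const, nsmul_eq_mul]; ring
  rw [h1, h2]
  have := Finset.card_filter_add_card_filter_not (s := (Finset.univ : Finset (Fin m)))
    (p := fun i => 0 < z i)
  have hm : ((Finset.univ.filter (fun i => 0 < z i)).card : ℝ)
      + ((Finset.univ.filter (fun i => ¬ 0 < z i)).card : ℝ) = m := by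
    exact_mod_cast this.trans (by simp)
  linarith

/-- Lagrangian lower bound: for every `z` with `N₊(z) < n`,
`‖u − z‖₂² ≥ Σ_i (u_i² + φ̄_ν(u_i)) − ν(2n − m)`, and hence the same bound holds
for the infimum over all such `z`. -/
theorem lagrangian_lower_bound (m n : ℕ) (hn : 1 ≤ n) (hmn : n ≤ m)
    (u : EuclideanSpace ℝ (Fin m)) (ν : ℝ) (hν : 0 ≤ ν) :
    (∀ z : EuclideanSpace ℝ (Fin m), Nplus z < n →
      ‖u - z‖ ^ 2 ≥
        (∑ i, (u i ^ 2 + phibar ν (u i))) - ν * (2 * (n : ℝ) - (m : ℝ))) ∧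
    (∑ i, (u i ^ 2 + phibar ν (u i))) - ν * (2 * (n : ℝ) - (m : ℝ)) ≤
      sInf {t : ℝ | ∃ z : EuclideanSpace ℝ (Fin m), Nplus z < n ∧ t = ‖u - z‖ ^ 2} := by
  have main : ∀ z : EuclideanSpace ℝ (Fin m), Nplus z < n →
      ‖u - z‖ ^ 2 ≥
        (∑ i, (u i ^ 2 + phibar ν (u i))) - ν * (2 * (n : ℝ) - (m : ℝ)) := by
    intro z hz
    have hnorm : ‖u - z‖ ^ 2 = ∑ i, (u i - z i) ^ 2 := by
      rw [EuclideanSpace.norm_eq, Real.sq_sqrt (Finset.sum_nonneg fun i _ => sq_nonneg _)]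
      refine Finset.sum_congr rfl fun i _ => ?_
      rw [Real.norm_eq_abs, sq_abs]; rfl
    have h1 : ∑ i, (u i ^ 2 + phibar ν (u i)) - ν * ∑ i, sgn (z i)
        ≤ ∑ i, (u i - z i) ^ 2 := by
      rw [Finset.mul_sum, ← Finset.sum_sub_distrib]
      exact Finset.sum_le_sum fun i _ => key ν hν (u i) (z i)
    have h2 : ν * ∑ i, sgn (z i) ≤ ν * (2 * (n : ℝ) - m) := by
      apply mul_le_mul_of_nonneg_left _ hν
      rw [sum_sgn]
      have : (Nplus z : ℝ) ≤ (n : ℝ) := by exact_mod_cast hz.le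
      linarith
    rw [hnorm]; linarith
  refine ⟨main, ?_⟩
  apply le_csInf
  · refine ⟨‖u - 0‖ ^ 2, 0, ?_, rfl⟩
    have : Nplus (0 : EuclideanSpace ℝ (Fin m)) = 0 := by
      unfold Nplus
      have he : {i : Fin m | 0 < (0 : EuclideanSpace ℝ (Fin m)) i} = ∅ := by
        ext i; simp [show (0 : EuclideanSpace ℝ (Fin m)) i = 0 from rfl]
      rw [he, Set.ncard_empty]
    omega
  · rintro t ⟨z, hz, rfl⟩
    exact main z hz
end

section
/- Let γ₁ denote the standard Gaussian measure on ℝ, let ν ≥ 0 and a = √(2ν), and write Q(a) = γ₁((a, ∞)) and p(a) = (2π)^{−1/2} e^{−a²/2}. Then ∫_ℝ ( g² + φ̄_ν(g) ) dγ₁(g) = 1/2 − ν − a·p(a) − Q(a) + 2ν·Q(a). -/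
/-!
The integrand is piecewise simple: `g² + φ̄_ν(g)` equals `-ν`, plus `g²` on `(0, a]`, plus `2ν`
on `(a, ∞)`. The only non-trivial piece is `∫_{(0,a]} g² dγ₁`; since the Gaussian density
satisfies `φ' = -gφ`, the function `-gφ(g)` is a primitive of `g²φ - φ`, which gives
`γ₁((0,a]) - a φ(a)`. Finally `γ₁((0,a]) = 1/2 - Q(a)` by the symmetry of `γ₁`.
-/

open MeasureTheory ProbabilityTheory

open Real Set

namespace ProbabilityTheory

lemma setIntegral_gaussianReal_eq_setIntegral_smul {E : Type*} [NormedAddCommGroup E]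
    [NormedSpace ℝ E] {μ : ℝ} {v : NNReal} (hv : v ≠ 0) {s : Set ℝ} (hs : MeasurableSet s)
    (f : ℝ → E) :
    ∫ x in s, f x ∂gaussianReal μ v = ∫ x in s, gaussianPDFReal μ v x • f x := by
  rw [← integral_indicator hs, ← integral_indicator hs, integral_gaussianReal_eq_integral_smul hv]
  congr with x
  by_cases hx : x ∈ s <;> simp [hx]

lemma hasDerivAt_gaussianPDFReal_zero_one (x : ℝ) :
    HasDerivAt (gaussianPDFReal 0 1) (-x * gaussianPDFReal 0 1 x) x := by
  have h : HasDerivAt (fun x : ℝ ↦ -x ^ 2 / 2) (-x) x :=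
    (((hasDerivAt_pow 2 x).neg).div_const 2).congr_deriv (by norm_num; ring)
  rw [gaussianPDFReal_def]
  simp only [NNReal.coe_one, mul_one, sub_zero]
  exact ((h.exp).const_mul (√(2 * π))⁻¹).congr_deriv (by ring)

lemma gaussianReal_real_Ioi_zero {v : NNReal} (hv : v ≠ 0) :
    (gaussianReal 0 v).real (Ioi 0) = 1 / 2 := by
  have : NullSingletonClass (gaussianReal 0 v) := nullSingletonClass_gaussianReal hv
  have hsymm : (gaussianReal 0 v).real (Iic 0) = (gaussianReal 0 v).real (Ioi 0) := by
    have hneg : (fun x : ℝ ↦ -x) ⁻¹' Ioi 0 = Iio 0 := by ext; simp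
    rw [← measureReal_congr Iio_ae_eq_Iic, ← hneg, ← map_measureReal_apply measurable_neg
      measurableSet_Ioi, gaussianReal_map_neg, neg_zero]
  have htotal := probReal_add_probReal_compl (μ := gaussianReal 0 v) (measurableSet_Ioi (a := 0))
  rw [compl_Ioi, hsymm] at htotal
  linarith

lemma setIntegral_Ioc_sq_gaussianReal {a b : ℝ} (hab : a ≤ b) :
    ∫ x in Ioc a b, x ^ 2 ∂gaussianReal 0 1
      = (gaussianReal 0 1).real (Ioc a b) + a * gaussianPDFReal 0 1 a
        - b * gaussianPDFReal 0 1 b := by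
  set φ := gaussianPDFReal 0 1
  have hφ : Continuous φ := continuous_iff_continuousAt.2 fun x ↦
    (hasDerivAt_gaussianPDFReal_zero_one x).continuousAt
  have hφ_int := hφ.intervalIntegrable (μ := volume) a b
  have hsq_int : IntervalIntegrable (fun x ↦ φ x * x ^ 2) volume a b :=
    (hφ.mul (continuous_pow 2)).intervalIntegrable a b
  have hprimitive : ∫ x in a..b, (φ x * x ^ 2 - φ x) = -b * φ b - -a * φ a := by
    refine intervalIntegral.integral_eq_sub_of_hasDerivAt (f := fun x ↦ -x * φ x)
      (fun x _ ↦ ?_) (hsq_int.sub hφ_int)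
    exact ((hasDerivAt_id x).neg.mul (hasDerivAt_gaussianPDFReal_zero_one x)).congr_deriv
      (by simp; ring)
  have hmass : (gaussianReal 0 1).real (Ioc a b) = ∫ x in a..b, φ x := by
    rw [intervalIntegral.integral_of_le hab, ← setIntegral_one_eq_measureReal,
      setIntegral_gaussianReal_eq_setIntegral_smul one_ne_zero measurableSet_Ioc]
    simp [φ]
  have hsq : ∫ x in Ioc a b, x ^ 2 ∂gaussianReal 0 1 = ∫ x in a..b, φ x * x ^ 2 := by
    rw [intervalIntegral.integral_of_le hab,
      setIntegral_gaussianReal_eq_setIntegral_smul one_ne_zero measurableSet_Ioc]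
    rfl
  rw [intervalIntegral.integral_sub hsq_int hφ_int] at hprimitive
  rw [hsq, hmass]
  linarith

end ProbabilityTheory

lemma sq_add_phibar (ν g : ℝ) :
    g ^ 2 + phibar ν g = -ν + (Ioc 0 √(2 * ν)).indicator (· ^ 2) g
      + (Ioi √(2 * ν)).indicator (fun _ ↦ 2 * ν) g := by
  have ha : 0 ≤ √(2 * ν) := sqrt_nonneg _
  simp only [phibar, indicator_apply, mem_Ioc, mem_Ioi]
  split_ifs <;> grind

lemma integral_sq_add_phibar (μ : Measure ℝ) [IsProbabilityMeasure μ] (ν : ℝ) :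
    ∫ g, (g ^ 2 + phibar ν g) ∂μ
      = -ν + ∫ x in Ioc 0 √(2 * ν), x ^ 2 ∂μ + 2 * ν * μ.real (Ioi √(2 * ν)) := by
  have hsq : Integrable ((Ioc 0 √(2 * ν)).indicator (· ^ 2)) μ :=
    (integrable_indicator_iff measurableSet_Ioc).2
      (((continuous_pow 2).integrableOn_Icc).mono_set Ioc_subset_Icc_self)
  have hconst : Integrable ((Ioi √(2 * ν)).indicator fun _ ↦ 2 * ν) μ :=
    (integrable_const _).indicator measurableSet_Ioi
  simp_rw [sq_add_phibar]
  rw [integral_add (f := fun g ↦ -ν + _) ((integrable_const _).add hsq) hconst,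
    integral_add (integrable_const _) hsq,
    integral_indicator measurableSet_Ioc, integral_indicator measurableSet_Ioi]
  simp [mul_comm]

theorem first_level_integral_general (ν : ℝ)
    (a : ℝ) (ha : a = Real.sqrt (2 * ν))
    (Q : ℝ) (hQ : Q = ((gaussianReal 0 1) (Set.Ioi a)).toReal)
    (p : ℝ) (hp : p = (Real.sqrt (2 * Real.pi))⁻¹ * Real.exp (-(a ^ 2) / 2)) :
    ∫ g, (g ^ 2 + phibar ν g) ∂(gaussianReal 0 1)
      = 1 / 2 - ν - a * p - Q + 2 * ν * Q := by
  have ha₀ : 0 ≤ a := ha ▸ Real.sqrt_nonneg _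
  have hp' : p = gaussianPDFReal 0 1 a := by simp [hp, gaussianPDFReal_def]
  have hQ' : Q = (gaussianReal 0 1).real (Ioi a) := hQ
  have hmass : (gaussianReal 0 1).real (Ioc 0 a) = 1 / 2 - Q := by
    rw [hQ', ← gaussianReal_real_Ioi_zero one_ne_zero, ← Ioc_union_Ioi_eq_Ioi ha₀,
      measureReal_union Ioc_disjoint_Ioi_same measurableSet_Ioi]
    ring
  rw [integral_sq_add_phibar, ← ha, setIntegral_Ioc_sq_gaussianReal ha₀, hmass, ← hQ', ← hp']
  ring

/-- Closed form of the first-level Gaussian integral: with `a = √(2ν)`,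
`Q(a) = γ₁((a,∞))` and `p(a) = (2π)^{-1/2} e^{-a²/2}`,
`∫ (g² + φ̄_ν(g)) dγ₁(g) = 1/2 − ν − a·p(a) − Q(a) + 2ν·Q(a)`. -/
theorem first_level_integral (ν : ℝ) (hν : 0 ≤ ν)
    (a : ℝ) (ha : a = Real.sqrt (2 * ν))
    (Q : ℝ) (hQ : Q = ((gaussianReal 0 1) (Set.Ioi a)).toReal)
    (p : ℝ) (hp : p = (Real.sqrt (2 * Real.pi))⁻¹ * Real.exp (-(a ^ 2) / 2)) :
    ∫ g, (g ^ 2 + phibar ν g) ∂(gaussianReal 0 1)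
      = 1 / 2 - ν - a * p - Q + 2 * ν * Q :=
  first_level_integral_general ν a ha Q hQ p hp
end

section
/- (The Gaussian interval integral I₁.) Let A, B, C, D, F ∈ ℝ with C ≥ 0, and set s = 2A²C + 1, D' = ( 2AC(AD + B) + D )/√s and F' = ( 2AC(AF + B) + F )/√s. Then ∫_D^F e^{−C(Au + B)²} (2π)^{−1/2} e^{−u²/2} du = ( e^{−B²C/s} / √s ) · ∫_{D'}^{F'} (2π)^{−1/2} e^{−t²/2} dt. -/
/-- The Gaussian interval integral `I₁(A,B,C,D,F)`: with `s = 2A²C + 1`,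
`D' = (2AC(AD+B)+D)/√s`, `F' = (2AC(AF+B)+F)/√s`,
`∫_D^F e^{−C(Au+B)²} (2π)^{−1/2} e^{−u²/2} du
  = (e^{−B²C/s}/√s) ∫_{D'}^{F'} (2π)^{−1/2} e^{−t²/2} dt`. -/
theorem gaussian_interval_integral_I1 (A B C D F : ℝ) (hC : 0 ≤ C)
    (s : ℝ) (hs : s = 2 * A ^ 2 * C + 1)
    (D' : ℝ) (hD' : D' = (2 * A * C * (A * D + B) + D) / Real.sqrt s)
    (F' : ℝ) (hF' : F' = (2 * A * C * (A * F + B) + F) / Real.sqrt s) :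
    (∫ u in D..F,
        Real.exp (-(C * (A * u + B) ^ 2))
          * ((Real.sqrt (2 * Real.pi))⁻¹ * Real.exp (-(u ^ 2) / 2)))
      = (Real.exp (-(B ^ 2 * C / s)) / Real.sqrt s)
        * ∫ t in D'..F', (Real.sqrt (2 * Real.pi))⁻¹ * Real.exp (-(t ^ 2) / 2) := by
  have hs0 : (0:ℝ) < s := by nlinarith [sq_nonneg A, mul_nonneg (sq_nonneg A) hC]
  set c := Real.sqrt s with hc
  have hc0 : 0 < c := Real.sqrt_pos.mpr hs0
  have hcs : c ^ 2 = s := Real.sq_sqrt hs0.le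
  have hne : c ≠ 0 := hc0.ne'
  set d : ℝ := 2 * A * B * C / c with hd
  have hD'' : D' = c * D + d := by
    rw [hD', hd]
    field_simp
    linear_combination -D * hcs - D * hs
  have hF'' : F' = c * F + d := by
    rw [hF', hd]
    field_simp
    linear_combination -F * hcs - F * hs
  have h1 : (∫ u in D..F,
      (Real.sqrt (2 * Real.pi))⁻¹ * Real.exp (-((c * u + d) ^ 2) / 2))
      = c⁻¹ • ∫ t in D'..F', (Real.sqrt (2 * Real.pi))⁻¹ * Real.exp (-(t ^ 2) / 2) := by
    rw [hD'', hF'']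
    exact intervalIntegral.integral_comp_mul_add
      (fun t => (Real.sqrt (2 * Real.pi))⁻¹ * Real.exp (-(t ^ 2) / 2)) hne d
  have h2 : ∀ u : ℝ,
      Real.exp (-(C * (A * u + B) ^ 2)) * ((Real.sqrt (2 * Real.pi))⁻¹ * Real.exp (-(u ^ 2) / 2))
      = Real.exp (-(B ^ 2 * C / s)) *
        ((Real.sqrt (2 * Real.pi))⁻¹ * Real.exp (-((c * u + d) ^ 2) / 2)) := by
    intro u
    have hcd : c * d = 2 * A * B * C := by rw [hd]; field_simp
    have hd2 : d ^ 2 = 4 * A ^ 2 * B ^ 2 * C ^ 2 / s := by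
      rw [hd]; rw [div_pow, hcs]; ring
    have hexp : -(C * (A * u + B) ^ 2) + -(u ^ 2) / 2
        = -(B ^ 2 * C / s) + -((c * u + d) ^ 2) / 2 := by
      have : (c * u + d) ^ 2 = s * u ^ 2 + 2 * (c * d) * u + d ^ 2 := by
        rw [← hcs]; ring
      have h2A : (2 * A ^ 2 * C + 1) ≠ 0 := by positivity
      rw [this, hcd, hd2, hs]
      field_simp
      ring
    calc Real.exp (-(C * (A * u + B) ^ 2)) * ((Real.sqrt (2 * Real.pi))⁻¹ * Real.exp (-(u ^ 2) / 2))
        = (Real.sqrt (2 * Real.pi))⁻¹ * Real.exp (-(C * (A * u + B) ^ 2) + -(u ^ 2) / 2) := by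
          rw [Real.exp_add]; ring
      _ = (Real.sqrt (2 * Real.pi))⁻¹ * Real.exp (-(B ^ 2 * C / s) + -((c * u + d) ^ 2) / 2) := by
          rw [hexp]
      _ = Real.exp (-(B ^ 2 * C / s)) * ((Real.sqrt (2 * Real.pi))⁻¹ * Real.exp (-((c * u + d) ^ 2) / 2)) := by
          rw [Real.exp_add]; ring
  calc (∫ u in D..F,
        Real.exp (-(C * (A * u + B) ^ 2))
          * ((Real.sqrt (2 * Real.pi))⁻¹ * Real.exp (-(u ^ 2) / 2)))
      = ∫ u in D..F, Real.exp (-(B ^ 2 * C / s)) *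
          ((Real.sqrt (2 * Real.pi))⁻¹ * Real.exp (-((c * u + d) ^ 2) / 2)) := by
        simp only [h2]
    _ = Real.exp (-(B ^ 2 * C / s)) *
          ∫ u in D..F, (Real.sqrt (2 * Real.pi))⁻¹ * Real.exp (-((c * u + d) ^ 2) / 2) := by
        rw [intervalIntegral.integral_const_mul]
    _ = (Real.exp (-(B ^ 2 * C / s)) / c)
        * ∫ t in D'..F', (Real.sqrt (2 * Real.pi))⁻¹ * Real.exp (-(t ^ 2) / 2) := by
        rw [h1, smul_eq_mul]; ring
end

section
/- (Full second level inner integral.) Let γ₁ denote the standard Gaussian measure on ℝ. Let p ∈ (0,1), w ∈ ℝ, C ≥ 0, ν ≥ 0, and set a = √(2ν), A = √(1−p), B = w√p, ā₀ = −B/A, ā₂ = (a − B)/A, s = 2A²C + 1, D' = ā₀/√s and F' = ( 2AC(Aā₂ + B) + ā₂ )/√s. Then ∫_ℝ exp( −C( (Ag + B)² + φ̄_ν(Ag + B) ) ) dγ₁(g) = e^{Cν}·Φ(ā₀) + e^{−Cν}·( 1 − Φ(ā₂) ) + e^{Cν} · ( e^{−B²C/s} / √s ) · ( Φ(F') − Φ(D')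 ). -/
open MeasureTheory ProbabilityTheory

/-!
With `u = A g + B`, the function `u² + φ̄_ν(u)` equals `-ν` for `u ≤ 0`, `u² - ν` for
`0 < u ≤ √(2ν)` and `ν` beyond, so the integrand is `e^{Cν}` for `g ≤ ā₀`, `e^{-Cν}` for
`g > ā₂` and `e^{Cν} e^{-C(Ag+B)²}` in between. The outer pieces are Gaussian masses of
half-lines. On the middle piece, completing the square turns the Gaussian density times
`e^{-C(Ag+B)²}` into `e^{-B²C/s}` times the Gaussian density at `√s g + 2ABC/√s`, and this
affine substitution maps `(ā₀, ā₂]` onto `(D', F']`.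
-/

open Set Real

section phibar

variable {ν u : ℝ}

lemma sq_add_phibar_of_nonpos (hu : u ≤ 0) : u ^ 2 + phibar ν u = -ν := by
  rw [phibar, if_pos hu]
  ring

lemma sq_add_phibar_of_pos_of_le (h0 : 0 < u) (h : u ≤ √(2 * ν)) :
    u ^ 2 + phibar ν u = u ^ 2 - ν := by
  rw [phibar, if_neg h0.not_ge, if_pos h]
  ring

lemma sq_add_phibar_of_sqrt_lt (h : √(2 * ν) < u) : u ^ 2 + phibar ν u = ν := by
  rw [phibar, if_neg ((sqrt_nonneg _).trans_lt h).not_ge, if_neg h.not_ge]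
  ring

end phibar

lemma neg_abs_le_sq_add_phibar (ν u : ℝ) : -|ν| ≤ u ^ 2 + phibar ν u := by
  rcases le_or_gt u 0 with h0 | h0
  · rw [sq_add_phibar_of_nonpos h0]
    exact neg_le_neg (le_abs_self ν)
  rcases le_or_gt u √(2 * ν) with h | h
  · rw [sq_add_phibar_of_pos_of_le h0 h]
    nlinarith [le_abs_self ν, sq_nonneg u]
  · rw [sq_add_phibar_of_sqrt_lt h]
    exact neg_abs_le ν

@[fun_prop]
lemma measurable_phibar (ν : ℝ) : Measurable (phibar ν) :=
  Measurable.ite measurableSet_Iic (by fun_prop) <|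
    Measurable.ite measurableSet_Iic measurable_const (by fun_prop)

lemma integrable_exp_neg_mul_sq_add_phibar {μ : Measure ℝ} [IsFiniteMeasure μ] {C : ℝ}
    (hC : 0 ≤ C) (ν A B : ℝ) :
    Integrable (fun g ↦ exp (-(C * ((A * g + B) ^ 2 + phibar ν (A * g + B))))) μ := by
  refine .of_bound (by fun_prop : Measurable _).aestronglyMeasurable (exp (C * |ν|))
    (ae_of_all _ fun g ↦ ?_)
  rw [norm_of_nonneg (exp_pos _).le, exp_le_exp, neg_le, ← mul_neg]
  exact mul_le_mul_of_nonneg_left (neg_abs_le_sq_add_phibar ν _) hC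

lemma integral_eq_setIntegral_Iic_add_Ioc_add_Ioi {E : Type*} [NormedAddCommGroup E]
    [NormedSpace ℝ E] {μ : Measure ℝ} {f : ℝ → E} (hf : Integrable f μ) {x y : ℝ} (hxy : x ≤ y) :
    ∫ g, f g ∂μ = ∫ g in Iic x, f g ∂μ + ∫ g in Ioc x y, f g ∂μ + ∫ g in Ioi y, f g ∂μ := by
  rw [← integral_add_compl measurableSet_Iic hf (s := Iic y), compl_Iic,
    ← Iic_union_Ioc_eq_Iic hxy,
    setIntegral_union (Iic_disjoint_Ioc le_rfl) measurableSet_Ioc hf.integrableOn hf.integrableOn]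

lemma measureReal_Ioc_eq_sub {μ : Measure ℝ} [IsFiniteMeasure μ] {x y : ℝ} (hxy : x ≤ y) :
    μ.real (Ioc x y) = μ.real (Iic y) - μ.real (Iic x) := by
  rw [← Iic_sdiff_Iic, measureReal_sdiff (Iic_subset_Iic.2 hxy) measurableSet_Iic]

section regions

variable {μ : Measure ℝ} {ν A B C : ℝ}

lemma setIntegral_Iic_exp_neg_mul_sq_add_phibar [IsFiniteMeasure μ] (hA : 0 < A) :
    ∫ g in Iic (-B / A), exp (-(C * ((A * g + B) ^ 2 + phibar ν (A * g + B)))) ∂μ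
      = exp (C * ν) * μ.real (Iic (-B / A)) := by
  have hu : ∀ g ∈ Iic (-B / A), exp (-(C * ((A * g + B) ^ 2 + phibar ν (A * g + B))))
      = exp (C * ν) := fun g hg ↦ by
    rw [sq_add_phibar_of_nonpos (by linarith [(le_div_iff₀ hA).1 hg]), mul_neg, neg_neg]
  rw [setIntegral_congr_fun measurableSet_Iic hu, setIntegral_const, smul_eq_mul, mul_comm]

lemma setIntegral_Ioi_exp_neg_mul_sq_add_phibar [IsFiniteMeasure μ] (hA : 0 < A) :
    ∫ g in Ioi ((√(2 * ν) - B) / A), exp (-(C * ((A * g + B) ^ 2 + phibar ν (A * g + B)))) ∂μ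
      = exp (-(C * ν)) * μ.real (Ioi ((√(2 * ν) - B) / A)) := by
  have hu : ∀ g ∈ Ioi ((√(2 * ν) - B) / A),
      exp (-(C * ((A * g + B) ^ 2 + phibar ν (A * g + B)))) = exp (-(C * ν)) := fun g hg ↦ by
    rw [sq_add_phibar_of_sqrt_lt (by linarith [(div_lt_iff₀ hA).1 hg])]
  rw [setIntegral_congr_fun measurableSet_Ioi hu, setIntegral_const, smul_eq_mul, mul_comm]

lemma setIntegral_Ioc_exp_neg_mul_sq_add_phibar (hA : 0 < A) :
    ∫ g in Ioc (-B / A) ((√(2 * ν) - B) / A),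
        exp (-(C * ((A * g + B) ^ 2 + phibar ν (A * g + B)))) ∂μ
      = exp (C * ν)
        * ∫ g in Ioc (-B / A) ((√(2 * ν) - B) / A), exp (-(C * (A * g + B) ^ 2)) ∂μ := by
  rw [← integral_const_mul]
  refine setIntegral_congr_fun measurableSet_Ioc fun g ⟨hg0, hg⟩ ↦ ?_
  rw [sq_add_phibar_of_pos_of_le (by linarith [(div_lt_iff₀ hA).1 hg0])
    (by linarith [(le_div_iff₀ hA).1 hg]), ← exp_add]
  ring_nf

end regions

section gaussian

variable {m : ℝ} {v : NNReal}

lemma setIntegral_gaussianReal_eq_setIntegral_gaussianPDFReal (hv : v ≠ 0) {S : Set ℝ}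
    (hS : MeasurableSet S) (f : ℝ → ℝ) :
    ∫ x in S, f x ∂gaussianReal m v = ∫ x in S, gaussianPDFReal m v x * f x := by
  rw [← integral_indicator hS, integral_gaussianReal_eq_integral_smul hv, ← integral_indicator hS]
  simp_rw [smul_eq_mul, indicator_mul_right]

lemma gaussianReal_real_eq_setIntegral_gaussianPDFReal (hv : v ≠ 0) (S : Set ℝ) :
    (gaussianReal m v).real S = ∫ x in S, gaussianPDFReal m v x := by
  rw [measureReal_def, gaussianReal_apply_eq_integral m hv,
    ENNReal.toReal_ofReal (setIntegral_nonneg_of_ae (ae_of_all _ (gaussianPDFReal_nonneg m v)))]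

lemma setIntegral_Ioc_gaussianPDFReal_comp_mul_add (hv : v ≠ 0) {t : ℝ} (ht : 0 < t) (d : ℝ)
    {x y : ℝ} (hxy : x ≤ y) :
    ∫ g in Ioc x y, gaussianPDFReal m v (t * g + d)
      = t⁻¹ * (gaussianReal m v).real (Ioc (t * x + d) (t * y + d)) := by
  have htxy : t * x + d ≤ t * y + d := by gcongr
  rw [← intervalIntegral.integral_of_le hxy, intervalIntegral.integral_comp_mul_add _ ht.ne',
    intervalIntegral.integral_of_le htxy, gaussianReal_real_eq_setIntegral_gaussianPDFReal hv,
    smul_eq_mul]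

end gaussian

lemma gaussianPDFReal_mul_exp_neg_mul_sq {A B C s : ℝ} (hs0 : 0 < s) (hs : 2 * A ^ 2 * C + 1 = s)
    (g : ℝ) :
    gaussianPDFReal 0 1 g * exp (-(C * (A * g + B) ^ 2))
      = exp (-(B ^ 2 * C / s)) * gaussianPDFReal 0 1 (√s * g + 2 * A * B * C / √s) := by
  have hsq : √s ^ 2 = s := sq_sqrt hs0.le
  have hexp : -g ^ 2 / 2 + -(C * (A * g + B) ^ 2)
      = -(B ^ 2 * C / s) + -(√s * g + 2 * A * B * C / √s) ^ 2 / 2 := by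
    have hs' : √s ≠ 0 := (sqrt_pos.2 hs0).ne'
    field_simp
    rw [hsq, ← hs]
    ring
  simp only [gaussianPDFReal_def, NNReal.coe_one, sub_zero, mul_one]
  rw [mul_assoc, ← exp_add, hexp, exp_add]
  ring

lemma setIntegral_Ioc_exp_neg_mul_sq_gaussianReal {A B C s : ℝ} (hs0 : 0 < s)
    (hs : 2 * A ^ 2 * C + 1 = s) {x y : ℝ} (hxy : x ≤ y) :
    ∫ g in Ioc x y, exp (-(C * (A * g + B) ^ 2)) ∂gaussianReal 0 1
      = exp (-(B ^ 2 * C / s)) / √s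
        * (gaussianReal 0 1).real
          (Ioc (√s * x + 2 * A * B * C / √s) (√s * y + 2 * A * B * C / √s)) := by
  rw [setIntegral_gaussianReal_eq_setIntegral_gaussianPDFReal one_ne_zero measurableSet_Ioc,
    setIntegral_congr_fun measurableSet_Ioc fun g _ ↦ gaussianPDFReal_mul_exp_neg_mul_sq hs0 hs g,
    integral_const_mul,
    setIntegral_Ioc_gaussianPDFReal_comp_mul_add one_ne_zero (sqrt_pos.2 hs0) _ hxy]
  ring

theorem full_second_level_inner_integral_general (p C ν : ℝ)
    (hp1 : p < 1) (hC : 0 ≤ C)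
    (a A B a0 a2 s D' F' : ℝ)
    (ha : a = Real.sqrt (2 * ν)) (hA : A = Real.sqrt (1 - p))
    (ha0 : a0 = -B / A) (ha2 : a2 = (a - B) / A) (hs : s = 2 * A ^ 2 * C + 1)
    (hD' : D' = a0 / Real.sqrt s)
    (hF' : F' = (2 * A * C * (A * a2 + B) + a2) / Real.sqrt s)
    (Φ : ℝ → ℝ) (hΦ : ∀ x, Φ x = ((gaussianReal 0 1) (Set.Iic x)).toReal) :
    ∫ g, Real.exp (-(C * ((A * g + B) ^ 2 + phibar ν (A * g + B)))) ∂(gaussianReal 0 1)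
      = Real.exp (C * ν) * Φ a0 + Real.exp (-(C * ν)) * (1 - Φ a2)
        + Real.exp (C * ν) * (Real.exp (-(B ^ 2 * C / s)) / Real.sqrt s)
          * (Φ F' - Φ D') := by
  have hA0 : 0 < A := hA ▸ sqrt_pos.2 (by linarith)
  have hs0 : 0 < s := by rw [hs]; positivity
  have hss : √s ≠ 0 := (sqrt_pos.2 hs0).ne'
  have h02 : a0 ≤ a2 := by rw [ha0, ha2, ha]; gcongr; linarith [sqrt_nonneg (2 * ν)]
  have hD : √s * a0 + 2 * A * B * C / √s = D' := by
    rw [hD', ha0]; field_simp; rw [sq_sqrt hs0.le, hs]; ring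
  have hF : √s * a2 + 2 * A * B * C / √s = F' := by
    rw [hF']; field_simp; rw [sq_sqrt hs0.le, hs]; ring
  have hDF : D' ≤ F' := by rw [← hD, ← hF]; gcongr
  subst ha ha0 ha2
  rw [integral_eq_setIntegral_Iic_add_Ioc_add_Ioi (integrable_exp_neg_mul_sq_add_phibar hC ν A B)
      h02, setIntegral_Iic_exp_neg_mul_sq_add_phibar hA0,
    setIntegral_Ioc_exp_neg_mul_sq_add_phibar hA0, setIntegral_Ioi_exp_neg_mul_sq_add_phibar hA0,
    setIntegral_Ioc_exp_neg_mul_sq_gaussianReal hs0 hs.symm h02, hD, hF, measureReal_Ioc_eq_sub hDF,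
    ← compl_Iic, probReal_compl_eq_one_sub measurableSet_Iic]
  simp only [hΦ, measureReal_def]
  ring

/-- Full second level inner integral `f̂₂^{(2)}`: with `a = √(2ν)`, `A = √(1−p)`,
`B = w√p`, `ā₀ = −B/A`, `ā₂ = (a−B)/A`, `s = 2A²C+1`, `D' = ā₀/√s`,
`F' = (2AC(Aā₂+B)+ā₂)/√s` and `Φ` the standard Gaussian CDF,
`∫ e^{−C((Ag+B)² + φ̄_ν(Ag+B))} dγ₁(g)
  = e^{Cν}Φ(ā₀) + e^{−Cν}(1 − Φ(ā₂)) + e^{Cν}(e^{−B²C/s}/√s)(Φ(F') − Φ(D'))`. -/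
theorem full_second_level_inner_integral (p w C ν : ℝ)
    (hp0 : 0 < p) (hp1 : p < 1) (hC : 0 ≤ C) (hν : 0 ≤ ν)
    (a A B a0 a2 s D' F' : ℝ)
    (ha : a = Real.sqrt (2 * ν)) (hA : A = Real.sqrt (1 - p)) (hB : B = w * Real.sqrt p)
    (ha0 : a0 = -B / A) (ha2 : a2 = (a - B) / A) (hs : s = 2 * A ^ 2 * C + 1)
    (hD' : D' = a0 / Real.sqrt s)
    (hF' : F' = (2 * A * C * (A * a2 + B) + a2) / Real.sqrt s)
    (Φ : ℝ → ℝ) (hΦ : ∀ x, Φ x = ((gaussianReal 0 1) (Set.Iic x)).toReal) :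
    ∫ g, Real.exp (-(C * ((A * g + B) ^ 2 + phibar ν (A * g + B)))) ∂(gaussianReal 0 1)
      = Real.exp (C * ν) * Φ a0 + Real.exp (-(C * ν)) * (1 - Φ a2)
        + Real.exp (C * ν) * (Real.exp (-(B ^ 2 * C / s)) / Real.sqrt s)
          * (Φ F' - Φ D') :=
  full_second_level_inner_integral_general p C ν hp1 hC a A B a0 a2 s D' F' ha hA ha0 ha2 hs hD' hF'
    Φ hΦ
end

section
/- (Three-level nested Gaussian identity.) Let γ₁ denote the standard Gaussian measure on ℝ. Let a, b, d ∈ ℝ, c₂, c₃ > 0, and C₂ ∈ ℝ with 1 − 2C₂a² > 0; set C₃ = (c₃/c₂)·C₂/(1 − 2C₂a²) and assume 1 − 2C₃b² > 0. Then (1/c₃) ∫_ℝ log( ∫_ℝ ( ∫_ℝ exp( C₂(ag + bh + dk)² ) dγ₁(g) )^{c₃/c₂} dγ₁(h) ) dγ₁(k) = −(1/(2c₂))·log(1 − 2C₂a²) − (1/(2c₃))·log(1 − 2C₃b²) + C₂ d² / ( c₂ (1 − 2C₂a²)(1 − 2C₃b²) ). -/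
/-!
Every level is the Gaussian integral of the exponential of a quadratic: integrating out `g`
turns `exp (C₂ (a g + m)²)` into `exp (C₂ m² / (1 - 2 C₂ a²)) / √(1 - 2 C₂ a²)`, and the power
`c₃ / c₂` rescales the coefficient of `m²` to exactly `C₃`, so integrating out `h` is the same
computation once more. The logarithm is then `α + β k²`, whose Gaussian mean is `α + β`.
-/

open MeasureTheory ProbabilityTheory Real

theorem integral_exp_neg_mul_sq_add_mul_add {p : ℝ} (hp : 0 < p) (q r : ℝ) :
    ∫ x, exp (-p * x ^ 2 + q * x + r) = √(π / p) * exp (q ^ 2 / (4 * p) + r) := by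
  have complete_square : ∀ x, exp (-p * x ^ 2 + q * x + r)
      = exp (q ^ 2 / (4 * p) + r) * exp (-p * (x - q / (2 * p)) ^ 2) := fun x => by
    rw [← exp_add]; congr 1; field_simp; ring
  simp_rw [complete_square]
  rw [integral_const_mul, integral_sub_right_eq_self (fun x => exp (-p * x ^ 2)),
    integral_gaussian, mul_comm]

theorem gaussianPDFReal_zero_one (x : ℝ) :
    gaussianPDFReal 0 1 x = (√(2 * π))⁻¹ * exp (-x ^ 2 / 2) := by
  simp [gaussianPDFReal]

theorem integral_exp_mul_sq_gaussianReal {C A : ℝ} (h : 0 < 1 - 2 * C * A ^ 2) (m : ℝ) :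
    ∫ g, exp (C * (A * g + m) ^ 2) ∂gaussianReal 0 1
      = exp (C * m ^ 2 / (1 - 2 * C * A ^ 2)) / √(1 - 2 * C * A ^ 2) := by
  set s := 1 - 2 * C * A ^ 2 with hs
  have integrand : ∀ g, gaussianPDFReal 0 1 g • exp (C * (A * g + m) ^ 2)
      = (√(2 * π))⁻¹ * exp (-(s / 2) * g ^ 2 + 2 * C * A * m * g + C * m ^ 2) := fun g => by
    rw [gaussianPDFReal_zero_one, smul_eq_mul, mul_assoc, ← exp_add]; congr 2; ring
  rw [integral_gaussianReal_eq_integral_smul one_ne_zero]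
  simp_rw [integrand]
  rw [integral_const_mul, integral_exp_neg_mul_sq_add_mul_add (by positivity),
    div_div_eq_mul_div, sqrt_div' _ h.le]
  have exponent : (2 * C * A * m) ^ 2 / (4 * (s / 2)) + C * m ^ 2 = C * m ^ 2 / s := by
    field_simp; rw [hs]; ring
  rw [exponent, mul_comm π 2]
  field_simp

theorem integral_sq_gaussianReal_zero (v : NNReal) : ∫ x, x ^ 2 ∂gaussianReal 0 v = v := by
  rw [← variance_of_integral_eq_zero aemeasurable_id' integral_id_gaussianReal,
    variance_fun_id_gaussianReal]

theorem three_level_nested_gaussian_general (a b d c₂ c₃ C₂ : ℝ)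
    (hc₃ : 0 < c₃)
    (h₂ : 0 < 1 - 2 * C₂ * a ^ 2)
    (C₃ : ℝ) (hC₃ : C₃ = (c₃ / c₂) * C₂ / (1 - 2 * C₂ * a ^ 2))
    (h₃ : 0 < 1 - 2 * C₃ * b ^ 2) :
    (1 / c₃) * ∫ k, Real.log (∫ h,
          (∫ g, Real.exp (C₂ * (a * g + b * h + d * k) ^ 2) ∂(gaussianReal 0 1))
            ^ (c₃ / c₂) ∂(gaussianReal 0 1)) ∂(gaussianReal 0 1)
      = -(1 / (2 * c₂)) * Real.log (1 - 2 * C₂ * a ^ 2)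
        - (1 / (2 * c₃)) * Real.log (1 - 2 * C₃ * b ^ 2)
        + C₂ * d ^ 2 / (c₂ * (1 - 2 * C₂ * a ^ 2) * (1 - 2 * C₃ * b ^ 2)) := by
  set s₂ := 1 - 2 * C₂ * a ^ 2
  set s₃ := 1 - 2 * C₃ * b ^ 2
  have power_of_inner : ∀ m, (∫ g, exp (C₂ * (a * g + m) ^ 2) ∂gaussianReal 0 1) ^ (c₃ / c₂)
      = (√s₂ ^ (c₃ / c₂))⁻¹ * exp (C₃ * m ^ 2) := fun m => by
    rw [integral_exp_mul_sq_gaussianReal h₂, div_rpow (exp_nonneg _) (sqrt_nonneg _), ← exp_mul,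
      hC₃, div_eq_inv_mul]
    congr 2
    ring
  have log_middle : ∀ k, log (∫ h, (∫ g, exp (C₂ * (a * g + b * h + d * k) ^ 2)
        ∂gaussianReal 0 1) ^ (c₃ / c₂) ∂gaussianReal 0 1)
      = -(c₃ / c₂) * log s₂ / 2 - log s₃ / 2 + C₃ * d ^ 2 / s₃ * k ^ 2 := fun k => by
    simp_rw [add_assoc, power_of_inner]
    rw [integral_const_mul, integral_exp_mul_sq_gaussianReal h₃, log_mul (by positivity)
      (by positivity), log_inv, log_rpow (sqrt_pos.2 h₂), log_div (exp_ne_zero _)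
      (sqrt_pos.2 h₃).ne', log_exp, log_sqrt h₂.le, log_sqrt h₃.le]
    ring
  simp_rw [log_middle]
  rw [integral_add (integrable_const _) (.const_mul
      (by exact (memLp_id_gaussianReal 2).integrable_sq) _),
    integral_const, integral_const_mul, integral_sq_gaussianReal_zero]
  simp only [probReal_univ, one_smul, NNReal.coe_one, mul_one]
  rw [hC₃]
  field_simp

/-- Three-level nested Gaussian identity: with `C₃ = (c₃/c₂)C₂/(1−2C₂a²)`,
`(1/c₃) ∫ log (∫ (∫ e^{C₂(ag+bh+dk)²} dγ₁(g))^{c₃/c₂} dγ₁(h)) dγ₁(k)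
  = −(1/(2c₂))log(1−2C₂a²) − (1/(2c₃))log(1−2C₃b²)
    + C₂d²/(c₂(1−2C₂a²)(1−2C₃b²))`. -/
theorem three_level_nested_gaussian (a b d c₂ c₃ C₂ : ℝ)
    (hc₂ : 0 < c₂) (hc₃ : 0 < c₃)
    (h₂ : 0 < 1 - 2 * C₂ * a ^ 2)
    (C₃ : ℝ) (hC₃ : C₃ = (c₃ / c₂) * C₂ / (1 - 2 * C₂ * a ^ 2))
    (h₃ : 0 < 1 - 2 * C₃ * b ^ 2) :
    (1 / c₃) * ∫ k, Real.log (∫ h,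
          (∫ g, Real.exp (C₂ * (a * g + b * h + d * k) ^ 2) ∂(gaussianReal 0 1))
            ^ (c₃ / c₂) ∂(gaussianReal 0 1)) ∂(gaussianReal 0 1)
      = -(1 / (2 * c₂)) * Real.log (1 - 2 * C₂ * a ^ 2)
        - (1 / (2 * c₃)) * Real.log (1 - 2 * C₃ * b ^ 2)
        + C₂ * d ^ 2 / (c₂ * (1 - 2 * C₂ * a ^ 2) * (1 - 2 * C₃ * b ^ 2)) :=
  three_level_nested_gaussian_general a b d c₂ c₃ C₂ hc₃ h₂ C₃ hC₃ h₃
end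

section
/- (Closed-form relations at the third level of lifting, algebraic core of Corollary 3.) Let 0 < p₃ < p₂ < 1, 0 < q₃ < q₂ < 1, γ > 0, and c₂, c₃ ∈ ℝ with d₁ := 2γ − c₂(1−q₂) > 0 and d₂ := d₁ − c₃(q₂−q₃) > 0. Assume the three stationarity equations (p₂−p₃)/(q₂−q₃) = 1/(d₁ d₂), p₃/q₃ = 1/d₂², and (1−p₂)/(1−q₂) = 1/(2γ d₁). Then γ = (1/2)·((1−q₂)/(1−p₂))·((p₂−p₃)/(q₂−q₃))·√(q₃/p₃), c₂ = (1/(1−p₂))·((p₂−p₃)/(q₂−q₃))·√(q₃/p₃) − (1/(1−q₂))·((q₂−q₃)/(p₂−p₃))·√(p₃/q₃), and c₃ = (1/(p₂−p₃))·√(p₃/q₃) − (1/(q₂−q₃))·√(q₃/p₃). -/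
/-- Closed-form relations at the third level of lifting (algebraic core of
Corollary 3): the three stationarity equations force the closed-form values of
`γ`, `c₂` and `c₃` in terms of `p₂, p₃, q₂, q₃`. -/
theorem third_level_closed_form (p₂ p₃ q₂ q₃ γ c₂ c₃ : ℝ)
    (hp3 : 0 < p₃) (hp32 : p₃ < p₂) (hp2 : p₂ < 1)
    (hq3 : 0 < q₃) (hq32 : q₃ < q₂) (hq2 : q₂ < 1)
    (hγ : 0 < γ)
    (hd1 : 0 < 2 * γ - c₂ * (1 - q₂))
    (hd2 : 0 < 2 * γ - c₂ * (1 - q₂) - c₃ * (q₂ - q₃))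
    (h1 : (p₂ - p₃) / (q₂ - q₃)
        = 1 / ((2 * γ - c₂ * (1 - q₂)) * (2 * γ - c₂ * (1 - q₂) - c₃ * (q₂ - q₃))))
    (h2 : p₃ / q₃ = 1 / (2 * γ - c₂ * (1 - q₂) - c₃ * (q₂ - q₃)) ^ 2)
    (h3 : (1 - p₂) / (1 - q₂) = 1 / (2 * γ * (2 * γ - c₂ * (1 - q₂)))) :
    γ = (1 / 2) * ((1 - q₂) / (1 - p₂)) * ((p₂ - p₃) / (q₂ - q₃))
        * Real.sqrt (q₃ / p₃) ∧
    c₂ = (1 / (1 - p₂)) * ((p₂ - p₃) / (q₂ - q₃)) * Real.sqrt (q₃ / p₃)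
        - (1 / (1 - q₂)) * ((q₂ - q₃) / (p₂ - p₃)) * Real.sqrt (p₃ / q₃) ∧
    c₃ = (1 / (p₂ - p₃)) * Real.sqrt (p₃ / q₃)
        - (1 / (q₂ - q₃)) * Real.sqrt (q₃ / p₃) := by
  have hq2p : (0:ℝ) < 1 - q₂ := by linarith
  have hp2p : (0:ℝ) < 1 - p₂ := by linarith
  have hqd : (0:ℝ) < q₂ - q₃ := by linarith
  have hpd : (0:ℝ) < p₂ - p₃ := by linarith
  have hr : (0:ℝ) < q₃ / p₃ := div_pos hq3 hp3
  set s := Real.sqrt (q₃ / p₃) with hsdef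
  have hs : 0 < s := Real.sqrt_pos.mpr hr
  have hs2 : s ^ 2 = q₃ / p₃ := Real.sq_sqrt hr.le
  have ht : Real.sqrt (p₃ / q₃) = s⁻¹ := by
    rw [hsdef, ← Real.sqrt_inv, inv_div]
  set d₁ := 2 * γ - c₂ * (1 - q₂) with hd₁def
  set d₂ := 2 * γ - c₂ * (1 - q₂) - c₃ * (q₂ - q₃) with hd₂def
  have h2' : d₂ ^ 2 = q₃ / p₃ := by
    rw [eq_div_iff hp3.ne']
    rw [div_eq_div_iff hq3.ne' (by positivity)] at h2
    linarith
  have hd2s : d₂ = s := by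
    have h := congrArg Real.sqrt h2'
    rwa [Real.sqrt_sq hd2.le] at h
  have hd1e : d₁ * s * (p₂ - p₃) = q₂ - q₃ := by
    rw [hd2s, div_eq_div_iff hqd.ne' (by positivity)] at h1
    linarith
  have hγd : 2 * γ * d₁ * (1 - p₂) = 1 - q₂ := by
    rw [div_eq_div_iff hq2p.ne' (by positivity)] at h3
    linarith
  have hc2 : c₂ * (1 - q₂) = 2 * γ - d₁ := by rw [hd₁def]; ring
  have hc3 : c₃ * (q₂ - q₃) = d₁ - s := by rw [← hd2s, hd₂def, hd₁def]; ring
  clear h1 h2 h3 h2' hd2s hd1 hd2 hd₁def hd₂def hsdef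
  refine ⟨?_, ?_, ?_⟩
  · field_simp
    linear_combination (-2*γ*(1-p₂)) * hd1e + s*(p₂-p₃) * hγd
  · rw [ht]
    field_simp
    linear_combination ((1-p₂)*(q₂-q₃)*(p₂-p₃)*s) * hc2
      + (p₂-p₃)*s*((-2*γ*(1-p₂))) * hd1e + (p₂-p₃)*s*(s*(p₂-p₃)) * hγd
      - (1-p₂)*(q₂-q₃) * hd1e
  · rw [ht]
    field_simp
    linear_combination (p₂-p₃)*s * hc3 + hd1e
end

section
/- (γ̂_sq^{(p)} = 1/(4γ̂_sq^{(q)}) at the third level: the underlying algebraic identity.) Let 0 < p₃ < p₂ < 1 and 0 < q₃ < q₂ < 1, and set γ = (1/2)·((1−q₂)/(1−p₂))·((p₂−p₃)/(q₂−q₃))·√(q₃/p₃), c₂ = (1/(1−p₂))·((p₂−p₃)/(q₂−q₃))·√(q₃/p₃) − (1/(1−q₂))·((q₂−q₃)/(p₂−p₃))·√(p₃/q₃), and c₃ = (1/(p₂−p₃))·√(p₃/q₃) − (1/(q₂−q₃))·√(q₃/p₃). Then c₂(1 − p₂q₂) + c₃(p₂q₂ − p₃q₃) − 2γ = −1/(2γ).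 In particular, if γ' satisfies 0 = c₂(1 − p₂q₂) + c₃(p₂q₂ − p₃q₃) − 2γ + 2γ', then γ' = 1/(4γ). -/
/-!
Write `s = √(q₃/p₃)`, so that `√(p₃/q₃) = s⁻¹`, and regard `γ, c₂, c₃` as
functions of a free `s`. For every `s ≠ 0` the left-hand side is the Laurent polynomial
`-p₃ s + (q₃ - (1 - p₂)(q₂ - q₃) / ((1 - q₂)(p₂ - p₃))) s⁻¹`; at
`s = √(q₃/p₃)` we have `p₃ s² = q₃`, the terms `-p₃ s + q₃ s⁻¹` cancel, and what remains is
`-1/(2γ)`.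
-/

noncomputable section

namespace ThirdLevel

variable (p₂ p₃ q₂ q₃ : ℝ)

def gamma (s : ℝ) : ℝ :=
  (1 / 2) * ((1 - q₂) / (1 - p₂)) * ((p₂ - p₃) / (q₂ - q₃)) * s

def c₂ (s : ℝ) : ℝ :=
  (1 / (1 - p₂)) * ((p₂ - p₃) / (q₂ - q₃)) * s - (1 / (1 - q₂)) * ((q₂ - q₃) / (p₂ - p₃)) * s⁻¹

def c₃ (s : ℝ) : ℝ :=
  (1 / (p₂ - p₃)) * s⁻¹ - (1 / (q₂ - q₃)) * s

def zeroValue (s : ℝ) : ℝ :=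
  c₂ p₂ p₃ q₂ q₃ s * (1 - p₂ * q₂) + c₃ p₂ p₃ q₂ q₃ s * (p₂ * q₂ - p₃ * q₃)
    - 2 * gamma p₂ p₃ q₂ q₃ s

variable {p₂ p₃ q₂ q₃}

theorem zeroValue_eq {s : ℝ} (hp₂ : 1 - p₂ ≠ 0) (hq₂ : 1 - q₂ ≠ 0) (hp : p₂ - p₃ ≠ 0)
    (hq : q₂ - q₃ ≠ 0) (hs : s ≠ 0) :
    zeroValue p₂ p₃ q₂ q₃ s =
      -p₃ * s + (q₃ - (1 - p₂) * (q₂ - q₃) / ((1 - q₂) * (p₂ - p₃))) * s⁻¹ := by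
  unfold zeroValue c₂ c₃ gamma
  field_simp
  ring

theorem zeroValue_eq_neg_inv_two_gamma {s : ℝ} (hp₂ : 1 - p₂ ≠ 0) (hq₂ : 1 - q₂ ≠ 0)
    (hp : p₂ - p₃ ≠ 0) (hq : q₂ - q₃ ≠ 0) (hs : s ≠ 0) (hsq : p₃ * s ^ 2 = q₃) :
    zeroValue p₂ p₃ q₂ q₃ s = -1 / (2 * gamma p₂ p₃ q₂ q₃ s) := by
  rw [zeroValue_eq hp₂ hq₂ hp hq hs, ← hsq]
  unfold gamma
  field_simp
  ring

end ThirdLevel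

end

open ThirdLevel in
/-- The algebraic identity underlying `γ̂_sq^{(p)} = 1/(4γ̂_sq^{(q)})` at the third
level of lifting: with `γ, c₂, c₃` the closed-form optimal values,
`c₂(1 − p₂q₂) + c₃(p₂q₂ − p₃q₃) − 2γ = −1/(2γ)`; hence any `γ'` with
`0 = c₂(1 − p₂q₂) + c₃(p₂q₂ − p₃q₃) − 2γ + 2γ'` satisfies `γ' = 1/(4γ)`. -/
theorem third_level_gamma_p (p₂ p₃ q₂ q₃ : ℝ)
    (hp3 : 0 < p₃) (hp32 : p₃ < p₂) (hp2 : p₂ < 1)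
    (hq3 : 0 < q₃) (hq32 : q₃ < q₂) (hq2 : q₂ < 1)
    (γ c₂ c₃ : ℝ)
    (hγ : γ = (1 / 2) * ((1 - q₂) / (1 - p₂)) * ((p₂ - p₃) / (q₂ - q₃))
        * Real.sqrt (q₃ / p₃))
    (hc₂ : c₂ = (1 / (1 - p₂)) * ((p₂ - p₃) / (q₂ - q₃)) * Real.sqrt (q₃ / p₃)
        - (1 / (1 - q₂)) * ((q₂ - q₃) / (p₂ - p₃)) * Real.sqrt (p₃ / q₃))
    (hc₃ : c₃ = (1 / (p₂ - p₃)) * Real.sqrt (p₃ / q₃)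
        - (1 / (q₂ - q₃)) * Real.sqrt (q₃ / p₃)) :
    c₂ * (1 - p₂ * q₂) + c₃ * (p₂ * q₂ - p₃ * q₃) - 2 * γ = -1 / (2 * γ) ∧
    ∀ γ' : ℝ,
      0 = c₂ * (1 - p₂ * q₂) + c₃ * (p₂ * q₂ - p₃ * q₃) - 2 * γ + 2 * γ' →
      γ' = 1 / (4 * γ) := by
  set s := Real.sqrt (q₃ / p₃)
  have hs : s ≠ 0 := (Real.sqrt_pos.2 (div_pos hq3 hp3)).ne'
  have hsq : p₃ * s ^ 2 = q₃ := by
    rw [Real.sq_sqrt (div_pos hq3 hp3).le, mul_div_cancel₀ _ hp3.ne']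
  have hsinv : Real.sqrt (p₃ / q₃) = s⁻¹ := by rw [← Real.sqrt_inv, inv_div]
  rw [hsinv] at hc₂ hc₃
  have key : c₂ * (1 - p₂ * q₂) + c₃ * (p₂ * q₂ - p₃ * q₃) - 2 * γ = -1 / (2 * γ) := by
    subst hγ hc₂ hc₃
    exact zeroValue_eq_neg_inv_two_gamma (by linarith) (by linarith) (by linarith)
      (by linarith) hs hsq
  refine ⟨key, fun γ' hγ' => ?_⟩
  rw [key] at hγ'
  linear_combination (-1 / 2 : ℝ) * hγ'
end
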